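/- arXiv:2203.10625 — 2 statements merged into one kernel-verified Lean document; each statement's English description precedes it below -/
import Mathlib

section
/- Let m > ν > 0 and n > 0, and set γ₁(t) = (1/n)·e^{-mt}·(m(e^{-νt}-1)+ν). Then γ₁(t) > 0 for 0 ≤ t < t* and γ₁(t) < 0 for all t > t*, where t* = (1/ν)·log(m/(m-ν)). -/
/-- Sign of the decay rate `γ₁` of the quasi-eternally non-Markovian GAD channel:
positive before `t* = (1/ν)·log(m/(m-ν))` and negative for all `t > t*`. -/
theorem qenm_gad_rate_sign (m n ν : ℝ) (hνm : ν < m) (hν : 0 < ν) (hn : 0 < n)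
    (γ₁ : ℝ → ℝ)
    (hγ₁ : ∀ t, γ₁ t = (1 / n) * Real.exp (-(m * t)) * (m * (Real.exp (-(ν * t)) - 1) + ν))
    (tstar : ℝ) (htstar : tstar = (1 / ν) * Real.log (m / (m - ν))) :
    (∀ t, 0 ≤ t → t < tstar → 0 < γ₁ t) ∧ (∀ t, tstar < t → γ₁ t < 0) := by
  have hmν : 0 < m - ν := by linarith
  have hm : 0 < m := lt_trans hν hνm
  have hpos : 0 < 1 / n := by positivity
  have hlog : Real.log (m / (m - ν)) = -Real.log ((m - ν) / m) := by
    rw [← Real.log_inv, inv_div]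
  have hexp : Real.exp (Real.log ((m - ν) / m)) = (m - ν) / m :=
    Real.exp_log (by positivity)
  constructor
  · intro t _ ht
    rw [hγ₁]
    have h1 : ν * t < Real.log (m / (m - ν)) := by
      have := (mul_lt_mul_iff_right₀ hν).2 ht
      rwa [htstar, ← mul_assoc, mul_one_div, div_self (ne_of_gt hν), one_mul] at this
    have h2 : Real.log ((m - ν) / m) < -(ν * t) := by
      rw [hlog] at h1; linarith
    have h3 : (m - ν) / m < Real.exp (-(ν * t)) := by
      rw [← hexp]; exact Real.exp_lt_exp.2 h2
    have h4 : m - ν < m * Real.exp (-(ν * t)) := by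
      have := (mul_lt_mul_iff_right₀ hm).2 h3
      rwa [mul_div_cancel₀ _ (ne_of_gt hm)] at this
    have : 0 < m * (Real.exp (-(ν * t)) - 1) + ν := by nlinarith
    positivity
  · intro t ht
    rw [hγ₁]
    have h1 : Real.log (m / (m - ν)) < ν * t := by
      have := (mul_lt_mul_iff_right₀ hν).2 ht
      rwa [htstar, ← mul_assoc, mul_one_div, div_self (ne_of_gt hν), one_mul] at this
    have h2 : -(ν * t) < Real.log ((m - ν) / m) := by
      rw [hlog] at h1; linarith
    have h3 : Real.exp (-(ν * t)) < (m - ν) / m := by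
      rw [← hexp]; exact Real.exp_lt_exp.2 h2
    have h4 : m * Real.exp (-(ν * t)) < m - ν := by
      have := (mul_lt_mul_iff_right₀ hm).2 h3
      rwa [mul_div_cancel₀ _ (ne_of_gt hm)] at this
    have hneg : m * (Real.exp (-(ν * t)) - 1) + ν < 0 := by nlinarith
    exact mul_neg_of_pos_of_neg (by positivity) hneg
end

section
/- Let m > ν > 0 and n > 0 and t* = (1/ν)·log(m/(m-ν)). Then -∫_{t*}^{∞} (1/n)·e^{-mt}·(m(e^{-νt}-1)+ν) dt = (ν/((ν+m)n))·(m/(m-ν))^{-(ν+m)/ν}. -/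
/-!
Splitting the integrand as `m e^{-(m+ν)t} - (m-ν) e^{-mt}` and integrating each exponential
gives `-∫_a^∞ γ = (m-ν)/m · e^{-ma} - m/(m+ν) · e^{-(m+ν)a}`. At `a = t*` we have
`e^{-ν t*} = (m-ν)/m`, so the two terms combine to `ν/(m+ν) · e^{-(m+ν)t*}`, and
`e^{-(m+ν)t*} = (m/(m-ν))^{-(m+ν)/ν}`.
-/

open MeasureTheory Real Set

lemma integral_Ioi_qenm_decay_rate {m ν : ℝ} (hm : 0 < m) (hmν : 0 < m + ν) (a : ℝ) :
    ∫ t in Ioi a, exp (-(m * t)) * (m * (exp (-(ν * t)) - 1) + ν)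
      = m / (m + ν) * exp (-((m + ν) * a)) - (m - ν) / m * exp (-(m * a)) := by
  have hsplit : ∀ t, exp (-(m * t)) * (m * (exp (-(ν * t)) - 1) + ν)
      = m * exp (-(m + ν) * t) - (m - ν) * exp (-m * t) := by
    intro t
    rw [show -(m + ν) * t = -(m * t) + -(ν * t) by ring, exp_add, neg_mul]
    ring
  have hmν' : -(m + ν) < 0 := by linarith
  have hm' : -m < 0 := by linarith
  simp_rw [hsplit]
  rw [integral_sub ((integrableOn_exp_mul_Ioi hmν' a).const_mul m)
      ((integrableOn_exp_mul_Ioi hm' a).const_mul (m - ν)),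
    integral_const_mul, integral_const_mul, integral_exp_mul_Ioi hmν', integral_exp_mul_Ioi hm']
  field_simp

lemma exp_neg_mul_inv_mul_log {A : ℝ} (hA : 0 < A) (c ν : ℝ) :
    exp (-(c * ((1 / ν) * log A))) = A ^ (-(c / ν)) := by
  rw [rpow_def_of_pos hA]
  ring_nf

theorem qenm_gad_hcla_measure_general (m n ν : ℝ) (hνm : ν < m) (hν : 0 < ν)
    (tstar : ℝ) (htstar : tstar = (1 / ν) * Real.log (m / (m - ν))) :
    -(∫ t in Set.Ioi tstar,
        (1 / n) * Real.exp (-(m * t)) * (m * (Real.exp (-(ν * t)) - 1) + ν))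
      = (ν / ((ν + m) * n)) * (m / (m - ν)) ^ (-((ν + m) / ν)) := by
  subst htstar
  have hm : 0 < m := hν.trans hνm
  have hmν : m - ν ≠ 0 := (sub_pos.mpr hνm).ne'
  have hA : 0 < m / (m - ν) := div_pos hm (sub_pos.mpr hνm)
  simp_rw [mul_assoc (1 / n)]
  rw [integral_const_mul, integral_Ioi_qenm_decay_rate hm (by linarith),
    exp_neg_mul_inv_mul_log hA, exp_neg_mul_inv_mul_log hA,
    show -(m / ν) = -((ν + m) / ν) + 1 by field_simp; ring, rpow_add hA, rpow_one, add_comm m ν]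
  field_simp
  ring

/-- The Hall–Cresser–Li–Anderson non-Markovianity measure of the quasi-eternally
non-Markovian GAD channel. -/
theorem qenm_gad_hcla_measure (m n ν : ℝ) (hνm : ν < m) (hν : 0 < ν) (hn : 0 < n)
    (tstar : ℝ) (htstar : tstar = (1 / ν) * Real.log (m / (m - ν))) :
    -(∫ t in Set.Ioi tstar,
        (1 / n) * Real.exp (-(m * t)) * (m * (Real.exp (-(ν * t)) - 1) + ν))
      = (ν / ((ν + m) * n)) * (m / (m - ν)) ^ (-((ν + m) / ν)) :=
  qenm_gad_hcla_measure_general m n ν hνm hν tstar htstar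
end
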